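/- arXiv:2210.14729 — 6 statements merged into one kernel-verified Lean document; each statement's English description precedes it below -/
import Mathlib

section
/- For any three matrices A, B, C in SL(2,ℂ), one has tr(C·B·A) + tr(C·A·B) = tr(C)·tr(B·A) + tr(B)·tr(C·A) + tr(A)·tr(C·B) − tr(A)·tr(B)·tr(C). -/
/-!
Polarizing the Cayley–Hamilton identity `A² = tr(A) A - det(A) I` for `2 × 2` matrices gives
`AB + BA = tr(A) B + tr(B) A + (tr(AB) - tr(A) tr(B)) I`; multiplying on the left by `C` and
taking traces yields the relation.
-/

namespace Matrix

variable {R : Type*} [CommRing R]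

theorem mul_add_mul_swap_fin_two (A B : Matrix (Fin 2) (Fin 2) R) :
    A * B + B * A = A.trace • B + B.trace • A + ((A * B).trace - A.trace * B.trace) • 1 := by
  ext i j
  fin_cases i <;> fin_cases j <;>
    simp only [Fin.zero_eta, Fin.mk_one, Fin.isValue, add_apply, mul_apply, Fin.sum_univ_two,
      trace_fin_two, smul_apply, smul_eq_mul, one_apply_eq, one_apply_ne, ne_eq, zero_ne_one,
      one_ne_zero, not_false_eq_true, mul_one, mul_zero, add_zero] <;> ring

theorem trace_mul_mul_add_trace_mul_mul_fin_two (A B C : Matrix (Fin 2) (Fin 2) R) :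
    (C * B * A).trace + (C * A * B).trace =
      C.trace * (B * A).trace + B.trace * (C * A).trace + A.trace * (C * B).trace
        - A.trace * B.trace * C.trace := by
  have h := congrArg (fun M => (C * M).trace) (mul_add_mul_swap_fin_two A B)
  simp only [mul_add, Matrix.mul_smul, Matrix.mul_one, trace_add, trace_smul, smul_eq_mul,
    ← Matrix.mul_assoc] at h
  rw [add_comm, h, trace_mul_comm A B]
  ring

end Matrix

theorem trace_triple_relation_general (A B C : Matrix (Fin 2) (Fin 2) ℂ) :
    (C * B * A).trace + (C * A * B).trace =
      C.trace * (B * A).trace + B.trace * (C * A).trace + A.trace * (C * B).trace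
        - A.trace * B.trace * C.trace :=
  Matrix.trace_mul_mul_add_trace_mul_mul_fin_two A B C

/-- For `A, B, C ∈ SL(2, ℂ)`,
`tr(CBA) + tr(CAB) = tr(C)tr(BA) + tr(B)tr(CA) + tr(A)tr(CB) − tr(A)tr(B)tr(C)`. -/
theorem trace_triple_relation (A B C : Matrix (Fin 2) (Fin 2) ℂ)
    (hA : A.det = 1) (hB : B.det = 1) (hC : C.det = 1) :
    (C * B * A).trace + (C * A * B).trace =
      C.trace * (B * A).trace + B.trace * (C * A).trace + A.trace * (C * B).trace
        - A.trace * B.trace * C.trace :=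
  trace_triple_relation_general A B C
end

section
/- For any four matrices A, B, C, D in SL(2,ℂ), one has 2·tr(ABCD) = tr(A)tr(B)tr(C)tr(D) + tr(A)tr(BCD) + tr(B)tr(ACD) + tr(C)tr(ABD) + tr(D)tr(ABC) + tr(AB)tr(CD) − tr(AC)tr(BD) + tr(AD)tr(BC) − tr(A)tr(B)tr(CD) − tr(A)tr(D)tr(BC) − tr(B)tr(C)tr(AD) − tr(D)tr(C)tr(AB). -/
/-!
Polarizing the Cayley–Hamilton identity of `2 × 2` matrices gives
`XY + YX = tr X • Y + tr Y • X - (tr X tr Y - tr (XY)) • 1`. Multiplied on the left by `A` and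
traced, it moves one factor of `A·B·C·D` to the end at the cost of lower-order traces. Moving
`B`, then `C`, then `D` returns to `A·B·C·D`, so the alternating sum of the three moves computes
`2 tr (ABCD)`; a fourth application trades the leftover `tr (ADB)` for `tr (ABD)`.
-/

open Matrix

namespace Matrix

variable {R : Type*} [CommRing R]

theorem mul_add_mul_eq_fin_two (X Y : Matrix (Fin 2) (Fin 2) R) :
    X * Y + Y * X = X.trace • Y + Y.trace • X - (X.trace * Y.trace - (X * Y).trace) • 1 := by
  ext i j
  fin_cases i <;> fin_cases j <;>
    simp only [Matrix.add_apply, Matrix.sub_apply, Matrix.smul_apply, smul_eq_mul, mul_apply,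
      Fin.sum_univ_two, trace_fin_two, one_apply, Fin.zero_eta, Fin.mk_one, Fin.isValue,
      ↓reduceIte, one_ne_zero, zero_ne_one] <;>
    ring

theorem trace_mul_mul_add_trace_mul_mul_fin_two_s2 (X Y M : Matrix (Fin 2) (Fin 2) R) :
    (X * Y * M).trace + (X * M * Y).trace =
      Y.trace * (X * M).trace + M.trace * (X * Y).trace
        - (Y.trace * M.trace - (Y * M).trace) * X.trace := by
  rw [← trace_add, Matrix.mul_assoc, Matrix.mul_assoc, ← Matrix.mul_add, mul_add_mul_eq_fin_two]
  simp only [Matrix.mul_sub, Matrix.mul_add, Matrix.mul_smul, Matrix.mul_one, trace_sub,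
    trace_add, trace_smul, smul_eq_mul]

end Matrix

theorem trace_four_product_general (A B C D : Matrix (Fin 2) (Fin 2) ℂ) :
    2 * (A * B * C * D).trace =
      A.trace * B.trace * C.trace * D.trace
      + A.trace * (B * C * D).trace + B.trace * (A * C * D).trace
      + C.trace * (A * B * D).trace + D.trace * (A * B * C).trace
      + (A * B).trace * (C * D).trace - (A * C).trace * (B * D).trace
      + (A * D).trace * (B * C).trace
      - A.trace * B.trace * (C * D).trace - A.trace * D.trace * (B * C).trace
      - B.trace * C.trace * (A * D).trace - D.trace * C.trace * (A * B).trace := by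
  have moveB := trace_mul_mul_add_trace_mul_mul_fin_two_s2 A B (C * D)
  have moveC := trace_mul_mul_add_trace_mul_mul_fin_two_s2 A C (D * B)
  have moveD := trace_mul_mul_add_trace_mul_mul_fin_two_s2 A D (B * C)
  have swapBD := trace_mul_mul_add_trace_mul_mul_fin_two_s2 A B D
  simp only [← Matrix.mul_assoc] at moveB moveC moveD
  rw [trace_mul_comm D B, trace_mul_cycle C D B] at moveC
  rw [← trace_mul_cycle B C D] at moveD
  linear_combination moveB - moveC + moveD - C.trace * swapBD

/-- Trace of a product of four `SL(2, ℂ)` matrices in terms of traces of products of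
at most three of them. -/
theorem trace_four_product (A B C D : Matrix (Fin 2) (Fin 2) ℂ)
    (hA : A.det = 1) (hB : B.det = 1) (hC : C.det = 1) (hD : D.det = 1) :
    2 * (A * B * C * D).trace =
      A.trace * B.trace * C.trace * D.trace
      + A.trace * (B * C * D).trace + B.trace * (A * C * D).trace
      + C.trace * (A * B * D).trace + D.trace * (A * B * C).trace
      + (A * B).trace * (C * D).trace - (A * C).trace * (B * D).trace
      + (A * D).trace * (B * C).trace
      - A.trace * B.trace * (C * D).trace - A.trace * D.trace * (B * C).trace
      - B.trace * C.trace * (A * D).trace - D.trace * C.trace * (A * B).trace :=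
  trace_four_product_general A B C D
end

section
/- For any six matrices A₁, A₂, A₃, B₁, B₂, B₃ in SL(2,ℂ), define s₃(C₁,C₂,C₃) = tr(C₁)·tr(C₃C₂) + tr(C₂)·tr(C₃C₁) + tr(C₃)·tr(C₂C₁) − tr(C₃)·tr(C₂)·tr(C₁) − 2·tr(C₃C₂C₁) and z(C,D) = tr(C·D) − (1/2)·tr(C)·tr(D). Then s₃(A₁,A₂,A₃)·s₃(B₁,B₂,B₃) + 2·det Z = 0, where Z is the 3×3 matrix with entries Z_{pq} = z(A_p, B_q). -/
/-!
Both `s₃` and `z` only see the traceless parts `C₀ = C - (tr C / 2)·1` of their arguments,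
i.e. vectors of `𝔰𝔩₂ ≅ ℂ³`. In these coordinates `s₃(C₁,C₂,C₃)` is the determinant of the
matrix with rows the three coordinate vectors, and `z(C,D) = tr(C₀D₀)` is the trace form,
whose Gram matrix `G` has determinant `-1/2`. Hence `Z = V_A G V_Bᵀ` and
`det Z = -(1/2) det V_A det V_B = -(1/2) s₃(A) s₃(B)`.
-/

open Matrix

/-- `s₃(C₁,C₂,C₃) = tr(C₁)tr(C₃C₂) + tr(C₂)tr(C₃C₁) + tr(C₃)tr(C₂C₁)
   − tr(C₃)tr(C₂)tr(C₁) − 2 tr(C₃C₂C₁)`. -/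
noncomputable def s3 (C1 C2 C3 : Matrix (Fin 2) (Fin 2) ℂ) : ℂ :=
  C1.trace * (C3 * C2).trace + C2.trace * (C3 * C1).trace + C3.trace * (C2 * C1).trace
    - C3.trace * C2.trace * C1.trace - 2 * (C3 * C2 * C1).trace

/-- `z(C,D) = tr(CD) − (1/2) tr(C) tr(D)`. -/
noncomputable def zf (C D : Matrix (Fin 2) (Fin 2) ℂ) : ℂ :=
  (C * D).trace - (1 / 2) * C.trace * D.trace

variable {R : Type*} [CommRing R]

/-- Coordinates of the traceless part of `C` in the basis `(H/2, E, F)` of `𝔰𝔩₂`. -/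
def tracelessCoords (C : Matrix (Fin 2) (Fin 2) R) : Fin 3 → R :=
  ![C 0 0 - C 1 1, C 0 1, C 1 0]

def tracelessCoordMatrix (A : Fin 3 → Matrix (Fin 2) (Fin 2) R) : Matrix (Fin 3) (Fin 3) R :=
  of fun p => tracelessCoords (A p)

noncomputable def traceFormGram : Matrix (Fin 3) (Fin 3) ℂ :=
  !![1 / 2, 0, 0; 0, 0, 1; 0, 1, 0]

theorem det_traceFormGram : traceFormGram.det = -1 / 2 := by
  rw [traceFormGram, det_fin_three]
  simp only [of_apply, cons_val', cons_val_zero, cons_val_one, cons_val_two, empty_val',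
    cons_val_fin_one]
  norm_num

theorem s3_eq_det_tracelessCoordMatrix (A : Fin 3 → Matrix (Fin 2) (Fin 2) ℂ) :
    s3 (A 0) (A 1) (A 2) = (tracelessCoordMatrix A).det := by
  simp only [s3, tracelessCoordMatrix, tracelessCoords, det_fin_three, trace_fin_two, mul_apply,
    Fin.sum_univ_two, of_apply, cons_val_zero, cons_val_one, cons_val_two, vecHead, vecTail,
    Function.comp_apply, Fin.succ_zero_eq_one]
  ring

theorem zf_eq_dotProduct_traceFormGram (C D : Matrix (Fin 2) (Fin 2) ℂ) :
    zf C D = tracelessCoords C ⬝ᵥ traceFormGram *ᵥ tracelessCoords D := by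
  simp only [zf, tracelessCoords, traceFormGram, trace_fin_two, mul_apply, Fin.sum_univ_two,
    dotProduct, mulVec, Fin.sum_univ_three, of_apply, cons_val_zero, cons_val_one, cons_val_two,
    vecHead, vecTail, Function.comp_apply, Fin.succ_zero_eq_one]
  ring

theorem of_zf_eq_mul_traceFormGram_mul (A B : Fin 3 → Matrix (Fin 2) (Fin 2) ℂ) :
    of (fun p q => zf (A p) (B q)) =
      tracelessCoordMatrix A * traceFormGram * (tracelessCoordMatrix B)ᵀ := by
  ext p q
  rw [mul_mul_apply, transpose_transpose, of_apply, zf_eq_dotProduct_traceFormGram]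
  rfl

theorem type1_relation_general (A B : Fin 3 → Matrix (Fin 2) (Fin 2) ℂ) :
    s3 (A 0) (A 1) (A 2) * s3 (B 0) (B 1) (B 2)
      + 2 * (Matrix.of fun p q : Fin 3 => zf (A p) (B q)).det = 0 := by
  rw [of_zf_eq_mul_traceFormGram_mul, det_mul, det_mul, det_transpose, det_traceFormGram,
    s3_eq_det_tracelessCoordMatrix, s3_eq_det_tracelessCoordMatrix]
  ring

/-- Type 1 relation: `s₃(A₁,A₂,A₃)·s₃(B₁,B₂,B₃) + 2·det Z = 0` where
`Z_{pq} = z(A_p, B_q)`. -/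
theorem type1_relation (A B : Fin 3 → Matrix (Fin 2) (Fin 2) ℂ)
    (hA : ∀ p, (A p).det = 1) (hB : ∀ q, (B q).det = 1) :
    s3 (A 0) (A 1) (A 2) * s3 (B 0) (B 1) (B 2)
      + 2 * (Matrix.of fun p q : Fin 3 => zf (A p) (B q)).det = 0 :=
  type1_relation_general A B
end

section
/- Let M ∈ SL(2,ℂ) and let H be a 2×2 complex Hermitian matrix with det H ≠ 0. If conj(M)ᵀ · H · M = H, then tr(M) is a real number. -/
open Matrix

/-!
An invariant nondegenerate form conjugates `Mᴴ` to `M⁻¹`, so `conj (tr M) = tr M⁻¹`.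
For a `2 × 2` matrix of determinant one, `M⁻¹` is the adjugate, whose trace is `tr M`.
-/

namespace Matrix

theorem trace_inv_eq_trace_of_det_eq_one {R : Type*} [CommRing R]
    (M : Matrix (Fin 2) (Fin 2) R) (hM : M.det = 1) : M⁻¹.trace = M.trace := by
  rw [inv_def, hM, Ring.inverse_one, one_smul, adjugate_fin_two, trace_fin_two, trace_fin_two]
  simp only [of_apply, cons_val', cons_val_zero, cons_val_one, empty_val', cons_val_fin_one]
  exact add_comm _ _

theorem inv_eq_of_conjTranspose_mul_mul_eq {n R : Type*} [Fintype n] [DecidableEq n]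
    [CommRing R] [StarRing R] {M H : Matrix n n R} (hH : IsUnit H.det)
    (hinv : Mᴴ * H * M = H) : M⁻¹ = H⁻¹ * Mᴴ * H :=
  inv_eq_left_inv <| by rw [mul_assoc, mul_assoc, ← mul_assoc Mᴴ, hinv, nonsing_inv_mul H hH]

theorem star_trace_eq_trace_inv_of_conjTranspose_mul_mul_eq {n R : Type*} [Fintype n]
    [DecidableEq n] [CommRing R] [StarRing R] {M H : Matrix n n R} (hH : IsUnit H.det)
    (hinv : Mᴴ * H * M = H) : star M.trace = M⁻¹.trace := by
  rw [inv_eq_of_conjTranspose_mul_mul_eq hH hinv, trace_mul_cycle,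
    mul_nonsing_inv H hH, one_mul, trace_conjTranspose]

end Matrix

theorem trace_real_of_invariant_hermitian_general (M H : Matrix (Fin 2) (Fin 2) ℂ)
    (hM : M.det = 1) (hd : H.det ≠ 0)
    (hinv : Mᴴ * H * M = H) :
    ∃ t : ℝ, M.trace = (t : ℂ) :=
  Complex.conj_eq_iff_real.mp <|
    (star_trace_eq_trace_inv_of_conjTranspose_mul_mul_eq (isUnit_iff_ne_zero.mpr hd) hinv).trans
      (trace_inv_eq_trace_of_det_eq_one M hM)

/-- If `M ∈ SL(2,ℂ)` preserves a nondegenerate Hermitian form `H`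
(`conj(M)ᵀ H M = H`), then `tr M` is real. -/
theorem trace_real_of_invariant_hermitian (M H : Matrix (Fin 2) (Fin 2) ℂ)
    (hM : M.det = 1) (hH : H.IsHermitian) (hd : H.det ≠ 0)
    (hinv : Mᴴ * H * M = H) :
    ∃ t : ℝ, M.trace = (t : ℂ) :=
  trace_real_of_invariant_hermitian_general M H hM hd hinv
end

section
/- Let (M₁, …, M_n) and (N₁, …, N_n) be two irreducible n-tuples of matrices in SL(2,ℂ) such that tr(M_i) = tr(N_i) for all i, tr(M_j·M_i) = tr(N_j·N_i) for all i < j, and tr(M_k·M_j·M_i) = tr(N_k·N_j·N_i) for all i < j < k. Then there exists P ∈ SL(2,ℂ) such that N_i = P·M_i·P⁻¹ for all i = 1,…,n. -/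
open Matrix

/-- A tuple `(M₁,…,Mₙ)` of `2×2` complex matrices is irreducible if the only
subspaces of `ℂ²` invariant under every `M_i` are `{0}` and `ℂ²`. -/
def IrreducibleTuple {n : ℕ} (M : Fin n → Matrix (Fin 2) (Fin 2) ℂ) : Prop :=
  ∀ W : Submodule ℂ (Fin 2 → ℂ), (∀ i, ∀ v ∈ W, (M i).mulVec v ∈ W) → W = ⊥ ∨ W = ⊤

namespace FrickeAux


abbrev Mat := Matrix (Fin 2) (Fin 2) ℂ

lemma tr_sq (X : Mat) : (X*X).trace = X.trace*X.trace - 2*X.det := by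
  simp [Matrix.trace, Matrix.mul_apply, Matrix.det_fin_two, Fin.sum_univ_succ]; ring

lemma tr_sq_mul (X Y : Mat) : (X*X*Y).trace = X.trace*(X*Y).trace - X.det*Y.trace := by
  simp [Matrix.trace, Matrix.mul_apply, Matrix.det_fin_two, Fin.sum_univ_succ]; ring

lemma tr_swap (C A B : Mat) : (C*A*B).trace = A.trace*(C*B).trace + B.trace*(C*A).trace
    + ((A*B).trace - A.trace*B.trace)*C.trace - (C*B*A).trace := by
  simp [Matrix.trace, Matrix.mul_apply, Fin.sum_univ_succ]; ring

lemma tr_cyc (A B C : Mat) : (A*B*C).trace = (C*A*B).trace := by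
  rw [Matrix.trace_mul_comm, ← mul_assoc]

noncomputable def a2 (A B : Mat) : ℂ := (A*B).trace - A.trace*B.trace/2

noncomputable def a3 (A B C : Mat) : ℂ := (A*B*C).trace - C.trace/2*(A*B).trace
    - B.trace/2*(A*C).trace - A.trace/2*(B*C).trace + A.trace*B.trace*C.trace/2

lemma tr_quartic (X Y Z W : Mat) :
    (X*Y*Z*W).trace =
     (a2 X Y * a2 Z W + a2 X W * a2 Y Z - a2 X Z * a2 Y W)/2
     + W.trace/2 * a3 X Y Z + Z.trace/2 * a3 X Y W + Y.trace/2 * a3 X Z W + X.trace/2 * a3 Y Z W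
     + Z.trace*W.trace/4 * a2 X Y + Y.trace*W.trace/4 * a2 X Z + Y.trace*Z.trace/4 * a2 X W
     + X.trace*W.trace/4 * a2 Y Z + X.trace*Z.trace/4 * a2 Y W + X.trace*Y.trace/4 * a2 Z W
     + X.trace*Y.trace*Z.trace*W.trace/8 := by
  simp [a2, a3, Matrix.trace, Matrix.mul_apply, Fin.sum_univ_succ]
  ring


variable {n : ℕ}

noncomputable def pm (M : Fin n → Mat) (w : List (Fin n)) : Mat := (w.map M).prod

@[simp] lemma pm_nil (M : Fin n → Mat) : pm M [] = 1 := rfl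

@[simp] lemma pm_cons (M : Fin n → Mat) (a : Fin n) (w : List (Fin n)) :
    pm M (a :: w) = M a * pm M w := by simp [pm]

lemma pm_append (M : Fin n → Mat) (w u : List (Fin n)) :
    pm M (w ++ u) = pm M w * pm M u := by simp [pm]

section traces

variable (M N : Fin n → Mat)
variable (hM : ∀ i, (M i).det = 1) (hN : ∀ i, (N i).det = 1)
variable (h1 : ∀ i, (M i).trace = (N i).trace)
variable (h2 : ∀ i j : Fin n, i < j → (M j * M i).trace = (N j * N i).trace)
variable (h3 : ∀ i j k : Fin n, i < j → j < k →
      (M k * M j * M i).trace = (N k * N j * N i).trace)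

include hM hN h1 h2 in
lemma lem2 : ∀ a b : Fin n, (M a * M b).trace = (N a * N b).trace := by
  intro a b
  rcases lt_trichotomy a b with h | h | h
  · rw [Matrix.trace_mul_comm, h2 a b h, Matrix.trace_mul_comm]
  · subst h; rw [tr_sq, tr_sq, hM, hN, h1]
  · exact h2 b a h

include hM hN h1 h2 h3 in
lemma lem3 : ∀ a b c : Fin n, (M a * M b * M c).trace = (N a * N b * N c).trace := by
  have l2 := lem2 M N hM hN h1 h2
  have key2 : ∀ a b c : Fin n, c < b → b < a →
      (M a * M b * M c).trace = (N a * N b * N c).trace := fun a b c hcb hba => h3 c b a hcb hba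
  have key3 : ∀ a b c : Fin n, c < b → b < a →
      (M a * M c * M b).trace = (N a * N c * N b).trace := by
    intro a b c hcb hba
    rw [tr_swap (M a) (M c) (M b), tr_swap (N a) (N c) (N b),
      key2 a b c hcb hba, l2, l2, l2, h1, h1, h1]
  intro a b c
  by_cases hab : a = b
  · subst hab
    rw [tr_sq_mul, tr_sq_mul, hM, hN, h1, l2, h1]
  by_cases hbc : b = c
  · subst hbc
    rw [tr_cyc (M a), tr_cyc (M b) (M a), tr_sq_mul, tr_cyc (N a), tr_cyc (N b) (N a),
      tr_sq_mul, hM, hN, h1, l2, h1]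
  by_cases hac : a = c
  · subst hac
    rw [tr_cyc (M a) (M b), tr_cyc (N a) (N b), tr_sq_mul, tr_sq_mul, hM, hN, h1, l2, h1]
  rcases lt_trichotomy a b with h | h | h
  · rcases lt_trichotomy b c with h' | h' | h'
    · rw [tr_cyc (M a), tr_cyc (N a)]; exact key3 c b a h h'
    · exact absurd h' hbc
    · rcases lt_trichotomy a c with h'' | h'' | h''
      · rw [tr_cyc (M a), tr_cyc (M c), tr_cyc (N a), tr_cyc (N c)]; exact key2 b c a h'' h'
      · exact absurd h'' hac
      · rw [tr_cyc (M a), tr_cyc (M c), tr_cyc (N a), tr_cyc (N c)]; exact key3 b a c h'' h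
  · exact absurd h hab
  · rcases lt_trichotomy b c with h' | h' | h'
    · rcases lt_trichotomy a c with h'' | h'' | h''
      · rw [tr_cyc (M a), tr_cyc (N a)]; exact key2 c a b h h''
      · exact absurd h'' hac
      · exact key3 a c b h' h''
    · exact absurd h' hbc
    · exact key2 a b c h' h


include hM hN h1 h2 h3 in
lemma traces_eq : ∀ (w : List (Fin n)), (pm M w).trace = (pm N w).trace := by
  have main : ∀ (m : ℕ) (w : List (Fin n)), w.length ≤ m →
      (pm M w).trace = (pm N w).trace := by
    intro m
    induction m with
    | zero =>
      intro w hw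
      rw [List.length_eq_zero_iff.mp (Nat.le_zero.mp hw)]; rfl
    | succ m IH =>
      intro w hw
      match w with
      | [] => rfl
      | [a] => simpa [pm] using h1 a
      | [a, b] =>
        have := lem2 M N hM hN h1 h2 a b
        simp only [pm, List.map, List.prod_cons, List.prod_nil, mul_one]
        exact this
      | [a, b, c] =>
        have := lem3 M N hM hN h1 h2 h3 a b c
        simp only [pm, List.map, List.prod_cons, List.prod_nil, mul_one, mul_assoc] at this ⊢
        exact this
      | a :: b :: c :: d :: rest =>
        have hlen : rest.length + 4 ≤ m + 1 := by simp at hw; omega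
        set u : List (Fin n) := d :: rest with hu
        have hul : u.length = rest.length + 1 := by simp [hu]
        have cmp1 : ∀ (x : List (Fin n)), x.length ≤ m → (pm M x).trace = (pm N x).trace := IH
        have cmp2 : ∀ (x y : List (Fin n)), x.length + y.length ≤ m →
            (pm M x * pm M y).trace = (pm N x * pm N y).trace := by
          intro x y h
          rw [← pm_append, ← pm_append]
          exact IH _ (by simpa using h)
        have cmp3 : ∀ (x y z : List (Fin n)), x.length + y.length + z.length ≤ m →
            (pm M x * pm M y * pm M z).trace = (pm N x * pm N y * pm N z).trace := by
          intro x y z h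
          rw [← pm_append, ← pm_append, ← pm_append, ← pm_append]
          exact IH _ (by simp; omega)
        rw [show pm M (a::b::c::u) = pm M [a] * pm M [b] * pm M [c] * pm M u from by
              simp [pm, mul_assoc],
            show pm N (a::b::c::u) = pm N [a] * pm N [b] * pm N [c] * pm N u from by
              simp [pm, mul_assoc],
            tr_quartic, tr_quartic]
        simp only [a2, a3]
        rw [cmp1 [a] (by simp; omega), cmp1 [b] (by simp; omega), cmp1 [c] (by simp; omega),
            cmp1 u (by omega),
            cmp2 [a] [b] (by simp; omega), cmp2 [a] [c] (by simp; omega),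
            cmp2 [a] u (by simp; omega), cmp2 [b] [c] (by simp; omega),
            cmp2 [b] u (by simp; omega), cmp2 [c] u (by simp; omega),
            cmp3 [a] [b] [c] (by simp; omega), cmp3 [a] [b] u (by simp; omega),
            cmp3 [a] [c] u (by simp; omega), cmp3 [b] [c] u (by simp; omega)]
  exact fun w => main w.length w le_rfl


end traces

/-- evaluation of a matrix on a fixed vector, as a linear map -/
noncomputable def evv (v : Fin 2 → ℂ) : Mat →ₗ[ℂ] (Fin 2 → ℂ) where
  toFun A := A.mulVec v
  map_add' A B := Matrix.add_mulVec A B v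
  map_smul' c A := by simp [Matrix.smul_mulVec]

@[simp] lemma evv_apply (v : Fin 2 → ℂ) (A : Mat) : evv v A = A.mulVec v := rfl

lemma burnside (M : Fin n → Mat)
    (hirr : ∀ W : Submodule ℂ (Fin 2 → ℂ), (∀ i, ∀ v ∈ W, (M i).mulVec v ∈ W) → W = ⊥ ∨ W = ⊤) :
    Submodule.span ℂ (Set.range (pm M)) = ⊤ := by
  set A := Submodule.span ℂ (Set.range (pm M)) with hA
  have one_mem : (1 : Mat) ∈ A := Submodule.subset_span ⟨[], rfl⟩
  have hclose : ∀ i, ∀ a ∈ A, M i * a ∈ A := by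
    intro i a ha
    induction ha using Submodule.span_induction with
    | mem x hx =>
      obtain ⟨w, rfl⟩ := hx
      exact Submodule.subset_span ⟨i :: w, by simp⟩
    | zero => simpa using A.zero_mem
    | add x y _ _ hx hy => rw [mul_add]; exact A.add_mem hx hy
    | smul c x _ hx => rw [mul_smul_comm]; exact A.smul_mem c hx
  have step1 : ∀ v : Fin 2 → ℂ, v ≠ 0 → ∀ w, ∃ a ∈ A, a.mulVec v = w := by
    intro v hv
    set W := A.map (evv v) with hW
    have hWinv : ∀ i, ∀ x ∈ W, (M i).mulVec x ∈ W := by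
      rintro i x ⟨a, ha, rfl⟩
      exact ⟨M i * a, hclose i a ha, by simp only [evv_apply, Matrix.mulVec_mulVec]⟩
    rcases hirr W hWinv with hbot | htop
    · exfalso
      have : v ∈ W := ⟨1, one_mem, by simp⟩
      rw [hbot] at this
      exact hv (by simpa using this)
    · intro w
      have : w ∈ W := htop ▸ Submodule.mem_top
      obtain ⟨a, ha, hav⟩ := this
      exact ⟨a, ha, hav⟩
  set e0 : Fin 2 → ℂ := Pi.single 0 1 with he0def
  set e1 : Fin 2 → ℂ := Pi.single 1 1 with he1def
  have he0 : e0 ≠ 0 := by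
    intro h
    have := congrFun h 0
    simp [he0def] at this
  set A' := A ⊓ LinearMap.ker (evv e0) with hA'
  set W2 := A'.map (evv e1) with hW2
  have hW2inv : ∀ i, ∀ x ∈ W2, (M i).mulVec x ∈ W2 := by
    rintro i x ⟨a, ⟨ha, hk⟩, rfl⟩
    refine ⟨M i * a, ⟨hclose i a ha, ?_⟩, by simp only [evv_apply, Matrix.mulVec_mulVec]⟩
    have hk' : a.mulVec e0 = 0 := hk
    exact LinearMap.mem_ker.mpr
      (by rw [evv_apply, ← Matrix.mulVec_mulVec, hk', Matrix.mulVec_zero])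
  rcases hirr W2 hW2inv with hbot | htop
  · -- construct T and derive a contradiction
    exfalso
    set f : A →ₗ[ℂ] (Fin 2 → ℂ) := (evv e0).comp A.subtype with hf
    set g : A →ₗ[ℂ] (Fin 2 → ℂ) := (evv e1).comp A.subtype with hg
    have hfsurj : LinearMap.range f = ⊤ := by
      rw [LinearMap.range_eq_top]
      intro w
      obtain ⟨a, ha, hav⟩ := step1 e0 he0 w
      exact ⟨⟨a, ha⟩, hav⟩
    have hkerfg : LinearMap.ker f ≤ LinearMap.ker g := by
      rintro ⟨a, ha⟩ hk
      have hk' : a.mulVec e0 = 0 := hk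
      have : a.mulVec e1 ∈ W2 := ⟨a, ⟨ha, hk'⟩, rfl⟩
      rw [hbot] at this
      exact (Submodule.mem_bot ℂ).mp this
    obtain ⟨s, hs⟩ := f.exists_rightInverse_of_surjective hfsurj
    set T := g.comp s with hT
    have hfs : ∀ y, f (s y) = y := fun y => congrFun (congrArg DFunLike.coe hs) y
    have hTa : ∀ a ∈ A, T (a.mulVec e0) = a.mulVec e1 := by
      intro a ha
      have h1' : f (s (a.mulVec e0) - ⟨a, ha⟩) = 0 := by
        rw [map_sub, hfs]; simp [hf]
      have h2' : g (s (a.mulVec e0) - ⟨a, ha⟩) = 0 := hkerfg h1'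
      rw [map_sub] at h2'
      have : g (s (a.mulVec e0)) = g ⟨a, ha⟩ := by
        rwa [sub_eq_zero] at h2'
      simpa [hT, hg] using this
    have hTcomm : ∀ i (x : Fin 2 → ℂ), T ((M i).mulVec x) = (M i).mulVec (T x) := by
      intro i x
      obtain ⟨a, ha, rfl⟩ := step1 e0 he0 x
      rw [Matrix.mulVec_mulVec, hTa (M i * a) (hclose i a ha), hTa a ha, Matrix.mulVec_mulVec]
    -- T is scalar
    obtain ⟨μ, hμ⟩ := Module.End.exists_eigenvalue (T : Module.End ℂ (Fin 2 → ℂ))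
    obtain ⟨v₀, hv₀mem, hv₀ne⟩ := hμ.exists_hasEigenvector
    set K := LinearMap.ker (T - μ • LinearMap.id) with hK
    have hmemK : ∀ x, x ∈ K ↔ T x = μ • x := by
      intro x
      rw [hK, LinearMap.mem_ker, LinearMap.sub_apply, LinearMap.smul_apply, LinearMap.id_apply,
        sub_eq_zero]
    have hKinv : ∀ i, ∀ x ∈ K, (M i).mulVec x ∈ K := by
      intro i x hx
      rw [hmemK] at hx ⊢
      rw [hTcomm, hx, Matrix.mulVec_smul]
    rcases hirr K hKinv with hKbot | hKtop
    · have : v₀ ∈ K := (hmemK v₀).mpr (Module.End.mem_eigenspace_iff.mp hv₀mem)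
      rw [hKbot] at this
      exact hv₀ne (by simpa using this)
    · have hTall : ∀ x, T x = μ • x := by
        intro x
        have : x ∈ K := hKtop ▸ Submodule.mem_top
        exact (hmemK x).mp this
      have : e1 = μ • e0 := by
        have := hTa 1 one_mem
        simpa [Matrix.one_mulVec, hTall] using this.symm
      have := congrFun this 1
      simp [he0def, he1def] at this
  · -- two point transitivity gives A = ⊤
    have dens : ∀ w₁ w₂ : Fin 2 → ℂ, ∃ a ∈ A, a.mulVec e0 = w₁ ∧ a.mulVec e1 = w₂ := by
      intro w₁ w₂
      obtain ⟨a₁, ha₁, hv₁⟩ := step1 e0 he0 w₁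
      have : w₂ - a₁.mulVec e1 ∈ W2 := htop ▸ Submodule.mem_top
      obtain ⟨a', ⟨ha', hk'⟩, hv'⟩ := this
      refine ⟨a₁ + a', A.add_mem ha₁ ha', ?_, ?_⟩
      · rw [Matrix.add_mulVec, hv₁]
        have : a'.mulVec e0 = 0 := hk'
        rw [this, add_zero]
      · have hv'' : a'.mulVec e1 = w₂ - a₁.mulVec e1 := hv'
        rw [Matrix.add_mulVec, hv'']
        abel
    rw [eq_top_iff]
    rintro B -
    obtain ⟨a, ha, hc0, hc1⟩ := dens (B.mulVec e0) (B.mulVec e1)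
    have : a = B := by
      ext i j
      fin_cases j
      · have := congrFun hc0 i
        simpa [he0def] using this
      · have := congrFun hc1 i
        simpa [he1def] using this
    rwa [this] at ha

lemma trace_mul_basis (B : Mat) (i j : Fin 2) :
    (B * Matrix.single j i (1:ℂ)).trace = B i j := by
  fin_cases i <;> fin_cases j <;>
    simp [Matrix.trace, Matrix.mul_apply, Matrix.single, Fin.sum_univ_succ]

lemma eq_zero_of_trace_mul_eq_zero (B : Mat) (h : ∀ C : Mat, (B * C).trace = 0) : B = 0 := by
  ext i j
  have := h (Matrix.single j i 1)
  rw [trace_mul_basis] at this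
  simpa using this

end FrickeAux

open FrickeAux in
/-- Two irreducible tuples in `SL(2,ℂ)` whose traces of single, double, and triple
products agree are simultaneously conjugate by some `P ∈ SL(2,ℂ)`. -/
theorem irreducible_tuples_conjugate_of_traces (n : ℕ)
    (M N : Fin n → Matrix (Fin 2) (Fin 2) ℂ)
    (hM : ∀ i, (M i).det = 1) (hN : ∀ i, (N i).det = 1)
    (hMirr : IrreducibleTuple M) (hNirr : IrreducibleTuple N)
    (h1 : ∀ i, (M i).trace = (N i).trace)
    (h2 : ∀ i j : Fin n, i < j → (M j * M i).trace = (N j * N i).trace)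
    (h3 : ∀ i j k : Fin n, i < j → j < k →
      (M k * M j * M i).trace = (N k * N j * N i).trace) :
    ∃ P : Matrix (Fin 2) (Fin 2) ℂ, P.det = 1 ∧ ∀ i, N i = P * M i * P⁻¹ := by
  classical
  have hMtop := burnside M hMirr
  have hNtop := burnside N hNirr
  have traces := traces_eq M N hM hN h1 h2 h3
  set L : (List (Fin n) →₀ ℂ) →ₗ[ℂ] Mat := Finsupp.linearCombination ℂ (pm M) with hL
  set L' : (List (Fin n) →₀ ℂ) →ₗ[ℂ] Mat := Finsupp.linearCombination ℂ (pm N) with hL'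
  have expand : ∀ (K : Fin n → Mat) (c : List (Fin n) →₀ ℂ) (u : List (Fin n)),
      ((Finsupp.linearCombination ℂ (pm K) c) * pm K u).trace
        = ∑ w ∈ c.support, c w * (pm K (w ++ u)).trace := by
    intro K c u
    rw [Finsupp.linearCombination_apply, Finsupp.sum, Finset.sum_mul, Matrix.trace_sum]
    exact Finset.sum_congr rfl fun w _ => by
      rw [smul_mul_assoc, Matrix.trace_smul, pm_append, smul_eq_mul]
  have hker : ∀ c, L c = 0 → L' c = 0 := by
    intro c hc
    have key : ∀ u : List (Fin n), (L' c * pm N u).trace = 0 := by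
      intro u
      have hMside : (L c * pm M u).trace = 0 := by rw [hc, zero_mul, Matrix.trace_zero]
      rw [hL, expand] at hMside
      rw [hL', expand]
      rw [← hMside]
      exact Finset.sum_congr rfl fun w _ => by rw [traces (w ++ u)]
    apply eq_zero_of_trace_mul_eq_zero
    intro C
    have hC : C ∈ Submodule.span ℂ (Set.range (pm N)) := by rw [hNtop]; trivial
    induction hC using Submodule.span_induction with
    | mem x hx => obtain ⟨u, rfl⟩ := hx; exact key u
    | zero => simp
    | add x y _ _ hx hy => rw [mul_add, Matrix.trace_add, hx, hy, add_zero]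
    | smul r x _ hx => rw [mul_smul_comm, Matrix.trace_smul, hx, smul_zero]
  have hLrange : LinearMap.range L = ⊤ := by
    rw [hL, Finsupp.range_linearCombination, hMtop]
  obtain ⟨s, hs⟩ := L.exists_rightInverse_of_surjective hLrange
  have hfs : ∀ y, L (s y) = y := fun y => congrFun (congrArg DFunLike.coe hs) y
  set φ : Mat →ₗ[ℂ] Mat := L'.comp s with hφ
  have hφw : ∀ w, φ (pm M w) = pm N w := by
    intro w
    have h0 : L (s (pm M w) - Finsupp.single w 1) = 0 := by
      rw [map_sub, hfs, hL, Finsupp.linearCombination_single, one_smul, sub_self]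
    have h0' := hker _ h0
    rw [map_sub, hL', Finsupp.linearCombination_single, one_smul, sub_eq_zero] at h0'
    exact h0'
  have hφmul : ∀ A B : Mat, φ (A * B) = φ A * φ B := by
    intro A B
    have hA : A ∈ Submodule.span ℂ (Set.range (pm M)) := by rw [hMtop]; trivial
    have hB : B ∈ Submodule.span ℂ (Set.range (pm M)) := by rw [hMtop]; trivial
    induction hA using Submodule.span_induction with
    | mem x hx =>
      obtain ⟨w, rfl⟩ := hx
      induction hB using Submodule.span_induction with
      | mem y hy => obtain ⟨u, rfl⟩ := hy; rw [← pm_append, hφw, hφw, hφw, pm_append]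
      | zero => simp
      | add y z _ _ hy hz => rw [mul_add, map_add, hy, hz, map_add, mul_add]
      | smul r y _ hy => rw [mul_smul_comm, _root_.map_smul, hy, _root_.map_smul, mul_smul_comm]
    | zero => simp
    | add x y _ _ hx hy => rw [add_mul, map_add, hx, hy, map_add, add_mul]
    | smul r x _ hx => rw [smul_mul_assoc, _root_.map_smul, hx, _root_.map_smul, smul_mul_assoc]
  have hφMi : ∀ i, φ (M i) = N i := by
    intro i
    have := hφw [i]
    simpa [pm] using this
  have hφsurj : Function.Surjective φ := by
    have : LinearMap.range φ = ⊤ := by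
      rw [eq_top_iff, ← hNtop, Submodule.span_le]
      rintro x ⟨w, rfl⟩
      exact ⟨pm M w, hφw w⟩
    exact LinearMap.range_eq_top.mp this
  have hφinj : Function.Injective φ := LinearMap.injective_iff_surjective.mpr hφsurj
  have hE0 : φ (Matrix.single (0 : Fin 2) (0 : Fin 2) (1:ℂ)) ≠ 0 := by
    intro h
    have h' : (Matrix.single (0 : Fin 2) (0 : Fin 2) (1:ℂ) : Mat) = 0 := hφinj (by rw [h, map_zero])
    have := congrFun (congrFun h' 0) 0
    simp [Matrix.single] at this
  obtain ⟨v, hv⟩ : ∃ v : Fin 2 → ℂ, (φ (Matrix.single (0 : Fin 2) (0 : Fin 2) (1:ℂ))).mulVec v ≠ 0 := by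
    by_contra hall
    push_neg at hall
    apply hE0
    ext i j
    have := congrFun (hall (Pi.single j 1)) i
    simpa [Matrix.mulVec_single] using this
  set P0 : Mat := Matrix.of fun i k => (φ (Matrix.single k (0 : Fin 2) (1:ℂ))).mulVec v i with hP0
  have key : ∀ A : Mat, φ A * P0 = P0 * A := by
    intro A
    have hAE : ∀ k : Fin 2, A * Matrix.single k (0 : Fin 2) (1:ℂ)
        = A 0 k • Matrix.single (0 : Fin 2) (0 : Fin 2) (1:ℂ) + A 1 k • Matrix.single (1 : Fin 2) (0 : Fin 2) (1:ℂ) := by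
      intro k
      ext i' j'
      fin_cases i' <;> fin_cases j' <;> fin_cases k <;>
        simp [Matrix.mul_apply, Matrix.single, Fin.sum_univ_succ]
    ext i k
    calc (φ A * P0) i k = ((φ A * φ (Matrix.single k (0 : Fin 2) (1:ℂ))).mulVec v) i := by
          simp [hP0, Matrix.mul_apply, Matrix.mulVec, dotProduct, Fin.sum_univ_succ]
          ring
      _ = ((φ (A * Matrix.single k (0 : Fin 2) (1:ℂ))).mulVec v) i := by rw [hφmul]
      _ = (P0 * A) i k := by
          rw [hAE k, map_add, _root_.map_smul, _root_.map_smul]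
          simp [hP0, Matrix.mul_apply, Matrix.mulVec, dotProduct,
            Matrix.add_mulVec, Matrix.smul_mulVec, Fin.sum_univ_succ]
          try ring
  have hrange : LinearMap.range (Matrix.mulVecLin P0) = ⊤ := by
    have hinv : ∀ i, ∀ x ∈ LinearMap.range (Matrix.mulVecLin P0),
        (N i).mulVec x ∈ LinearMap.range (Matrix.mulVecLin P0) := by
      rintro i x ⟨y, rfl⟩
      refine ⟨(M i).mulVec y, ?_⟩
      simp only [Matrix.mulVecLin_apply, Matrix.mulVec_mulVec]
      rw [← key (M i), hφMi]
    rcases hNirr _ hinv with hbot | htop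
    · exfalso
      have hmem : (φ (Matrix.single (0 : Fin 2) (0 : Fin 2) (1:ℂ))).mulVec v
          ∈ LinearMap.range (Matrix.mulVecLin P0) := by
        refine ⟨Pi.single 0 1, ?_⟩
        ext i
        simp [Matrix.mulVecLin_apply, hP0, Matrix.mulVec_single]
      rw [hbot] at hmem
      exact hv (by simpa using hmem)
    · exact htop
  have hPunit : IsUnit P0 := by
    rw [← Matrix.mulVec_surjective_iff_isUnit]
    intro w
    have : w ∈ LinearMap.range (Matrix.mulVecLin P0) := by rw [hrange]; trivial
    obtain ⟨y, hy⟩ := this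
    exact ⟨y, hy⟩
  have hdet0 : IsUnit P0.det := (Matrix.isUnit_iff_isUnit_det P0).mp hPunit
  obtain ⟨c, hc⟩ := IsAlgClosed.exists_pow_nat_eq (P0.det)⁻¹ (n := 2) two_pos
  refine ⟨c • P0, ?_, ?_⟩
  · rw [Matrix.det_smul]
    simp only [Fintype.card_fin]
    rw [hc, inv_mul_cancel₀ (by simpa using hdet0.ne_zero)]
  · intro i
    have hdetP : (c • P0).det = 1 := by
      rw [Matrix.det_smul]
      simp only [Fintype.card_fin]
      rw [hc, inv_mul_cancel₀ (by simpa using hdet0.ne_zero)]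
    have h5 : N i * (c • P0) = (c • P0) * M i := by
      rw [Matrix.mul_smul, Matrix.smul_mul, ← hφMi i, key (M i)]
    calc N i = N i * ((c • P0) * (c • P0)⁻¹) := by
          rw [Matrix.mul_nonsing_inv _ (by rw [hdetP]; exact isUnit_one), mul_one]
      _ = (N i * (c • P0)) * (c • P0)⁻¹ := by rw [mul_assoc]
      _ = (c • P0) * M i * (c • P0)⁻¹ := by rw [h5]
end

section
/- Let M ∈ SL(2,ℂ) satisfy conj(M₁₁) = M₂₂ and M₂₁ ≠ 0, and suppose M₁₂/conj(M₂₁) is a real number. Then for every real number h, the Hermitian matrix H = diag(h, −(M₁₂/conj(M₂₁))·h) satisfies conj(M)ᵀ · H · M = H. Conversely, if H = diag(h₁, h₂) is a diagonal 2×2 complex matrix with conj(M)ᵀ · H · M = H, then h₂ = −(M₁₂/conj(M₂₁))·h₁. -/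
open Matrix

/-- Let `M ∈ SL(2,ℂ)` with `conj(M₁₁) = M₂₂`, `M₂₁ ≠ 0` and `M₁₂/conj(M₂₁)` real.
Then for every real `h` the Hermitian matrix `H = diag(h, −(M₁₂/conj(M₂₁))·h)` is
invariant under `M`; conversely any invariant diagonal `H = diag(h₁,h₂)` satisfies
`h₂ = −(M₁₂/conj(M₂₁))·h₁`. -/
theorem invariant_diagonal_hermitian (M : Matrix (Fin 2) (Fin 2) ℂ)
    (hM : M.det = 1) (hsym : starRingEnd ℂ (M 0 0) = M 1 1)
    (h21 : M 1 0 ≠ 0) (hreal : ∃ t : ℝ, M 0 1 / starRingEnd ℂ (M 1 0) = (t : ℂ)) :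
    (∀ h : ℝ,
      Mᴴ * Matrix.diagonal ![(h : ℂ), -(M 0 1 / starRingEnd ℂ (M 1 0)) * (h : ℂ)] * M
        = Matrix.diagonal ![(h : ℂ), -(M 0 1 / starRingEnd ℂ (M 1 0)) * (h : ℂ)]) ∧
    (∀ h1 h2 : ℂ,
      Mᴴ * Matrix.diagonal ![h1, h2] * M = Matrix.diagonal ![h1, h2] →
      h2 = -(M 0 1 / starRingEnd ℂ (M 1 0)) * h1) := by
  obtain ⟨t, ht⟩ := hreal
  have hc' : starRingEnd ℂ (M 1 0) ≠ 0 := by simpa using h21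
  have hb : M 0 1 = (t : ℂ) * starRingEnd ℂ (M 1 0) := by field_simp at ht; exact ht.trans (mul_comm _ _)
  have hbc : starRingEnd ℂ (M 0 1) = (t : ℂ) * M 1 0 := by
    have := congrArg (starRingEnd ℂ) hb
    simpa using this
  have hsym' : starRingEnd ℂ (M 1 1) = M 0 0 := by
    have := congrArg (starRingEnd ℂ) hsym
    simpa using this.symm
  have hdet : M 0 0 * M 1 1 - M 0 1 * M 1 0 = 1 := by
    rw [← Matrix.det_fin_two]; exact hM
  constructor
  · intro h
    rw [ht]
    ext i j
    fin_cases i <;> fin_cases j <;>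
      simp only [Matrix.mul_apply, Fin.sum_univ_two, Matrix.conjTranspose_apply,
        Matrix.diagonal, Fin.mk_zero, Fin.mk_one, Matrix.cons_val', Matrix.cons_val_zero,
        Matrix.cons_val_one, Matrix.head_cons, Matrix.head_fin_const, Matrix.of_apply,
        Fin.isValue, one_ne_zero, zero_ne_one, if_true, if_false, ite_true, ite_false,
        mul_zero, zero_mul, add_zero, zero_add, RCLike.star_def]
    · linear_combination (h : ℂ) * M 0 0 * hsym + (h : ℂ) * hdet + (h : ℂ) * M 1 0 * hb
    · linear_combination (h : ℂ) * M 0 1 * hsym + (h : ℂ) * M 1 1 * hb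
    · linear_combination (h : ℂ) * M 0 0 * hbc - (t : ℂ) * (h : ℂ) * M 1 0 * hsym'
    · linear_combination (h : ℂ) * M 0 1 * hbc - (t : ℂ) * (h : ℂ) * M 1 1 * hsym'
        - (t : ℂ) * (h : ℂ) * hdet
  · intro h1 h2 heq
    rw [ht]
    have h00 := congrFun (congrFun heq 0) 0
    have h11 := congrFun (congrFun heq 1) 1
    simp only [Matrix.mul_apply, Fin.sum_univ_two, Matrix.conjTranspose_apply,
      Matrix.diagonal, Fin.mk_zero, Fin.mk_one, Matrix.cons_val', Matrix.cons_val_zero,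
      Matrix.cons_val_one, Matrix.head_cons, Matrix.head_fin_const, Matrix.of_apply,
      Fin.isValue, one_ne_zero, zero_ne_one, if_true, if_false, ite_true, ite_false,
      mul_zero, zero_mul, add_zero, zero_add, RCLike.star_def] at h00 h11
    by_cases ht0 : (t : ℂ) = 0
    · have key : starRingEnd ℂ (M 1 0) * M 1 0 * h2 = 0 := by
        linear_combination h00 - h1 * M 0 0 * hsym - h1 * hdet - h1 * M 1 0 * hb
          - h1 * M 1 0 * starRingEnd ℂ (M 1 0) * ht0
      have h2z : h2 = 0 := by
        rcases mul_eq_zero.mp key with hk | hk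
        · exact absurd hk (mul_ne_zero hc' h21)
        · exact hk
      rw [h2z, ht0]; ring
    · have key : (t : ℂ) * (M 1 0 * starRingEnd ℂ (M 1 0)) * ((t : ℂ) * h1 + h2) = 0 := by
        linear_combination h11 - M 0 1 * h1 * hbc - (t : ℂ) * M 1 0 * h1 * hb
          - M 1 1 * h2 * hsym' - h2 * hdet - M 1 0 * h2 * hb
      have hne : (t : ℂ) * (M 1 0 * starRingEnd ℂ (M 1 0)) ≠ 0 :=
        mul_ne_zero ht0 (mul_ne_zero h21 hc')
      have := (mul_eq_zero.mp key).resolve_left hne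
      linear_combination this
end
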